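/- arXiv:2504.16594 — 2 statements merged into one kernel-verified Lean document; each statement's English description precedes it below -/
import Mathlib

section
/- Let V be an n-dimensional complex vector space, and let k, r ≥ 1 be integers with 2 ≤ k, r + k < n, and 2k ≤ n. Consider the linear map θ_{k,r}: Λ^k V → Hom(Λ^r V, Λ^{r+k} V) given by wedge multiplication, ω ↦ (η ↦ ω ∧ η). Fix a basis e₁,...,e_n of V and set E := θ_{k,r}(e₁∧...∧e_k) and E' := θ_{k,r}(e_{n-k+1}∧...∧e_n). Then the kernel of E + E' has strictly smaller dimension than the kernel of E; in particular θ_{k,r} is not a space of matrices of constant rank. -/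
/-!
Index the monomial basis of the exterior algebra by finsets of basis indices, write
`K = {1, …, k}`, `L = {n-k+1, …, n}`, and let `E`, `E'` be left multiplication by `e_K`, `e_L`.
On `Λ^r V` the operator `E` sends `e_S` to `±e_{K ∪ S}` or to `0`, so its rank is at most
`C(n-k, r)`. For `E + E'` the `C(n-k, r)` vectors `(E + E') e_S` with `S ∩ L = ∅` are
independent, as the coordinate at `L ∪ S` detects exactly one of them; one more independent vector
is `(E + E') e_{S₀} = E e_{S₀}` for an `S₀` that avoids `K` and meets `L` but does not contain
it, detected by the coordinate at `K ∪ S₀`. Hence `rank (E + E') > rank E`, and rank–nullity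
turns this into the kernel inequality.
-/

open ExteriorAlgebra Set.powersetCard

theorem LinearIndependent.of_pairwise_dual_eq_zero_of_ne_zero {K V ι : Type*} [Field K]
    [AddCommGroup V] [Module K V] (v : ι → V) (f : ι → Module.Dual K V)
    (h1 : Pairwise fun i j ↦ f i (v j) = 0) (h2 : ∀ i, f i (v i) ≠ 0) :
    LinearIndependent K v :=
  .of_pairwise_dual_eq_zero_one v (fun i ↦ (f i (v i))⁻¹ • f i)
    (fun i j hij ↦ by simp [h1 hij]) (fun i ↦ inv_mul_cancel₀ (h2 i))

theorem Submodule.finrank_map_add_finrank_inf_ker {K V V₂ : Type*} [DivisionRing K]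
    [AddCommGroup V] [Module K V] [AddCommGroup V₂] [Module K V₂] (W : Submodule K V)
    [FiniteDimensional K W] (f : V →ₗ[K] V₂) :
    Module.finrank K (W.map f) + Module.finrank K ↥(W ⊓ LinearMap.ker f) =
      Module.finrank K W := by
  rw [← (f.domRestrict W).finrank_range_add_finrank_ker, LinearMap.range_domRestrict,
    LinearMap.ker_domRestrict, ← Submodule.finrank_map_subtype_eq, Submodule.map_comap_subtype]

namespace Module.Basis

section CommRing

variable {R M I : Type*} [CommRing R] [AddCommGroup M] [Module R M] [LinearOrder I]
  (b : Basis I R M)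

theorem list_prod_ι_eq_exteriorAlgebra {k : ℕ} (f : Fin k ↪o I) :
    ((List.finRange k).map fun i ↦ ι R (b (f i))).prod =
      b.ExteriorAlgebra (Finset.univ.map f.toEmbedding) := by
  have hcard : (Finset.univ.map f.toEmbedding).card = k := by simp
  have hf : ofCard hcard = ofFinEmbEquiv f :=
    Subtype.ext (by simp [ofFinEmbEquiv_apply, val_ofFinEmb])
  rw [ExteriorAlgebra.basis_apply_ofCard b hcard, ιMulti_family, ιMulti_apply, List.ofFn_eq_map,
    hf, Equiv.symm_apply_apply]
  rfl

theorem exteriorAlgebra_mem_exteriorPower (s : Finset I) :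
    b.ExteriorAlgebra s ∈ ⋀[R]^s.card M := by
  rw [ExteriorAlgebra.basis_apply]
  exact ExteriorAlgebra.ιMulti_range R s.card ⟨_, rfl⟩

theorem exteriorPower_eq_span_exteriorAlgebra (r : ℕ) :
    ⋀[R]^r M =
      Submodule.span R (Set.range fun s : Set.powersetCard I r ↦ b.ExteriorAlgebra s) := by
  simp_rw [ExteriorAlgebra.basis_apply_powersetCard]
  exact (exteriorPower.ιMulti_family_span_fixedDegree_of_span R b.span_eq).symm

theorem exteriorAlgebra_mul_of_not_disjoint {s t : Finset I} (h : ¬Disjoint s t) :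
    b.ExteriorAlgebra s * b.ExteriorAlgebra t = 0 :=
  ExteriorAlgebra.basis_mul_of_not_disjoint b (ofCard rfl) (ofCard rfl) h

theorem coord_exteriorAlgebra_mul_ne_zero_iff [Nontrivial R] {s t u : Finset I} :
    b.ExteriorAlgebra.coord u (b.ExteriorAlgebra s * b.ExteriorAlgebra t) ≠ 0 ↔
      Disjoint s t ∧ s ∪ t = u := by
  by_cases hst : Disjoint s t
  · have hmul := ExteriorAlgebra.basis_mul_of_disjoint b (ofCard rfl) (ofCard rfl) hst
    simp only [val_ofCard] at hmul
    rw [hmul, Units.smul_def, map_zsmul, coord_apply, repr_self, Finsupp.single_apply]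
    generalize Equiv.Perm.sign (permOfDisjoint (s := ofCard (n := s.card) rfl)
      (t := ofCard (n := t.card) rfl) hst) = ε
    obtain rfl | rfl := Int.units_eq_one_or ε <;> simp [hst, disjUnion, eq_comm]
  · simp [hst, b.exteriorAlgebra_mul_of_not_disjoint hst]

theorem coord_exteriorAlgebra_mul_eq_zero [Nontrivial R] {s t u : Finset I}
    (h : ¬(Disjoint s t ∧ s ∪ t = u)) :
    b.ExteriorAlgebra.coord u (b.ExteriorAlgebra s * b.ExteriorAlgebra t) = 0 :=
  not_not.mp (mt b.coord_exteriorAlgebra_mul_ne_zero_iff.mp h)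

section Coordinates

variable [Nontrivial R] {K L S T : Finset I} {x y : I}

theorem coord_union_add_mul_ne_zero_iff (hxL : x ∈ L) (hxK : x ∉ K) (hLS : Disjoint L S)
    (hLT : Disjoint L T) :
    b.ExteriorAlgebra.coord (L ∪ T)
        ((b.ExteriorAlgebra K + b.ExteriorAlgebra L) * b.ExteriorAlgebra S) ≠ 0 ↔ S = T := by
  have hK : ¬(Disjoint K S ∧ K ∪ S = L ∪ T) := fun ⟨_, hKS⟩ ↦ by
    rcases Finset.mem_union.mp (hKS ▸ Finset.mem_union_left T hxL) with hxK' | hxS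
    exacts [hxK hxK', Finset.disjoint_left.mp hLS hxL hxS]
  rw [add_mul, map_add, b.coord_exteriorAlgebra_mul_eq_zero hK, zero_add,
    b.coord_exteriorAlgebra_mul_ne_zero_iff]
  refine ⟨fun ⟨_, hLST⟩ ↦ ?_, fun hST ↦ ⟨hLS, hST ▸ rfl⟩⟩
  rw [← Finset.union_sdiff_cancel_left hLS, ← Finset.union_sdiff_cancel_left hLT, hLST]

theorem coord_union_add_mul_eq_zero (hxL : x ∈ L) (hxS : x ∈ S) (hyL : y ∈ L)
    (hyKS : y ∉ K ∪ S) (hKS : Disjoint K S) (hLT : Disjoint L T) :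
    b.ExteriorAlgebra.coord (K ∪ S)
        ((b.ExteriorAlgebra K + b.ExteriorAlgebra L) * b.ExteriorAlgebra T) = 0 := by
  have hK : ¬(Disjoint K T ∧ K ∪ T = K ∪ S) := fun ⟨hKT, hKTS⟩ ↦ by
    have hTS : T = S := by
      rw [← Finset.union_sdiff_cancel_left hKT, ← Finset.union_sdiff_cancel_left hKS, hKTS]
    exact Finset.disjoint_left.mp hLT hxL (hTS ▸ hxS)
  have hL : ¬(Disjoint L T ∧ L ∪ T = K ∪ S) := fun ⟨_, h⟩ ↦
    hyKS (h ▸ Finset.mem_union_left T hyL)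
  rw [add_mul, map_add, b.coord_exteriorAlgebra_mul_eq_zero hK,
    b.coord_exteriorAlgebra_mul_eq_zero hL, add_zero]

theorem coord_union_add_mul_self_ne_zero (hKS : Disjoint K S) (hLS : ¬Disjoint L S) :
    b.ExteriorAlgebra.coord (K ∪ S)
        ((b.ExteriorAlgebra K + b.ExteriorAlgebra L) * b.ExteriorAlgebra S) ≠ 0 := by
  rw [add_mul, b.exteriorAlgebra_mul_of_not_disjoint hLS, add_zero]
  exact b.coord_exteriorAlgebra_mul_ne_zero_iff.mpr ⟨hKS, rfl⟩

end Coordinates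

end CommRing

section Field

open Finset

variable {F M I : Type*} [Field F] [AddCommGroup M] [Module F M] [LinearOrder I] [Fintype I]
  (b : Basis I F M)

theorem finrank_map_mulLeft_exteriorAlgebra_le (K : Finset I) (r : ℕ) :
    finrank F (Submodule.map (LinearMap.mulLeft F (b.ExteriorAlgebra K)) (⋀[F]^r M)) ≤
      Kᶜ.card.choose r := by
  classical
  have hle : Submodule.map (LinearMap.mulLeft F (b.ExteriorAlgebra K)) (⋀[F]^r M) ≤
      Submodule.span F
        ((powersetCard r Kᶜ).image
          fun S ↦ b.ExteriorAlgebra K * b.ExteriorAlgebra S : Set _) := by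
    rw [b.exteriorPower_eq_span_exteriorAlgebra, Submodule.map_span, ← Set.range_comp,
      Submodule.span_le, Set.range_subset_iff]
    intro S
    by_cases hKS : Disjoint K S
    · refine Submodule.subset_span (mem_coe.mpr (mem_image.mpr ⟨S, ?_, rfl⟩))
      exact mem_powersetCard.mpr ⟨fun i hi ↦ mem_compl.mpr (disjoint_right.mp hKS hi), S.prop⟩
    · simp [b.exteriorAlgebra_mul_of_not_disjoint hKS]
  calc _ ≤ _ := Submodule.finrank_mono hle
    _ ≤ _ := finrank_span_finset_le_card _
    _ ≤ (powersetCard r Kᶜ).card := card_image_le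
    _ = _ := card_powersetCard _ _

theorem choose_card_compl_lt_finrank_map_mulLeft_exteriorAlgebra_add
    {K L : Finset I} {x y : I} (hxL : x ∈ L) (hxK : x ∉ K) (hyL : y ∈ L) (hyK : y ∉ K)
    (hxy : x ≠ y) {r : ℕ} (hr : 1 ≤ r) (hrK : r < Kᶜ.card) :
    Lᶜ.card.choose r < finrank F (Submodule.map
      (LinearMap.mulLeft F (b.ExteriorAlgebra K + b.ExteriorAlgebra L)) (⋀[F]^r M)) := by
  set B := b.ExteriorAlgebra
  set f := LinearMap.mulLeft F (B K + B L)
  obtain ⟨S₀, hxS₀, hS₀K, hS₀card⟩ : ∃ S₀, {x} ⊆ S₀ ∧ S₀ ⊆ Kᶜ.erase y ∧ S₀.card = r :=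
    exists_subsuperset_card_eq (by simp [hxK, hxy]) (by simpa using hr)
      (by rw [card_erase_of_mem (by simpa using hyK)]; omega)
  replace hxS₀ : x ∈ S₀ := singleton_subset_iff.mp hxS₀
  have hKS₀ : Disjoint K S₀ :=
    disjoint_right.mpr fun i hi ↦ mem_compl.mp (mem_of_mem_erase (hS₀K hi))
  have hyS₀ : y ∉ S₀ := fun hy ↦ notMem_erase y Kᶜ (hS₀K hy)
  let Z := powersetCard r Lᶜ
  have hLZ (T : Z) : Disjoint L T :=
    disjoint_right.mpr fun i hi ↦ mem_compl.mp ((mem_powersetCard.mp T.2).1 hi)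
  let v : Z → _root_.ExteriorAlgebra F M := fun T ↦ f (B T)
  have hv : LinearIndependent F v :=
    .of_pairwise_dual_eq_zero_of_ne_zero v (fun T ↦ B.coord (L ∪ T))
      (fun T S hTS ↦ not_not.mp fun h ↦ hTS (Subtype.ext
        ((b.coord_union_add_mul_ne_zero_iff hxL hxK (hLZ S) (hLZ T)).mp h).symm))
      (fun T ↦ (b.coord_union_add_mul_ne_zero_iff hxL hxK (hLZ T) (hLZ T)).mpr rfl)
  have hS₀ : f (B S₀) ∉ Submodule.span F (Set.range v) := by
    have hker : Submodule.span F (Set.range v) ≤ LinearMap.ker (B.coord (K ∪ S₀)) := by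
      rw [Submodule.span_le, Set.range_subset_iff]
      exact fun T ↦
        b.coord_union_add_mul_eq_zero hxL hxS₀ hyL (by simp [hyK, hyS₀]) hKS₀ (hLZ T)
    exact fun hmem ↦ b.coord_union_add_mul_self_ne_zero hKS₀
      (not_disjoint_iff.mpr ⟨x, hxL, hxS₀⟩) (hker hmem)
  have hspan : Submodule.span F (Set.range fun o ↦ Option.casesOn' o (f (B S₀)) v) ≤
      Submodule.map f (⋀[F]^r M) := by
    rw [Submodule.span_le, Set.range_subset_iff]
    rintro (_ | T)
    · exact Submodule.mem_map_of_mem (hS₀card ▸ b.exteriorAlgebra_mem_exteriorPower S₀)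
    · exact Submodule.mem_map_of_mem
        ((mem_powersetCard.mp T.2).2 ▸ b.exteriorAlgebra_mem_exteriorPower T)
  have : Module.Finite F M := .of_basis b
  calc Lᶜ.card.choose r < Fintype.card (Option Z) := by
        rw [Fintype.card_option, Fintype.card_coe, card_powersetCard]; omega
    _ = _ := (finrank_span_eq_card (hv.option hS₀)).symm
    _ ≤ _ := Submodule.finrank_mono hspan

theorem finrank_inf_ker_mulLeft_exteriorAlgebra_add_lt_and_not_constant_rank
    {K L : Finset I} {x y : I} (hKL : K.card = L.card) (hxL : x ∈ L) (hxK : x ∉ K)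
    (hyL : y ∈ L) (hyK : y ∉ K) (hxy : x ≠ y) {r : ℕ} (hr : 1 ≤ r)
    (hrK : r + K.card < Fintype.card I) :
    finrank F ↥(⋀[F]^r M ⊓
        LinearMap.ker (LinearMap.mulLeft F (b.ExteriorAlgebra K + b.ExteriorAlgebra L))) <
      finrank F ↥(⋀[F]^r M ⊓ LinearMap.ker (LinearMap.mulLeft F (b.ExteriorAlgebra K))) ∧
    ¬∃ c : ℕ, ∀ z ∈ ⋀[F]^K.card M, z ≠ 0 →
      finrank F ↥(Submodule.map (LinearMap.mulLeft F z) (⋀[F]^r M)) = c := by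
  have : Module.Finite F M := .of_basis b
  have hupper := b.finrank_map_mulLeft_exteriorAlgebra_le K r
  have hlower := b.choose_card_compl_lt_finrank_map_mulLeft_exteriorAlgebra_add hxL hxK hyL hyK
    hxy hr (by rw [card_compl]; omega)
  rw [card_compl] at hupper
  rw [card_compl, ← hKL] at hlower
  refine ⟨?_, fun ⟨c, hc⟩ ↦ ?_⟩
  · have := (⋀[F]^r M).finrank_map_add_finrank_inf_ker
      (LinearMap.mulLeft F (b.ExteriorAlgebra K))
    have := (⋀[F]^r M).finrank_map_add_finrank_inf_ker
      (LinearMap.mulLeft F (b.ExteriorAlgebra K + b.ExteriorAlgebra L))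
    omega
  have hK := b.exteriorAlgebra_mem_exteriorPower K
  have hL := hKL ▸ b.exteriorAlgebra_mem_exteriorPower L
  have hne : b.ExteriorAlgebra K + b.ExteriorAlgebra L ≠ 0 := fun h ↦ by
    have hKL : K ≠ L := fun h ↦ hxK (h ▸ hxL)
    simpa [Finsupp.single_apply, hKL.symm] using congrArg (b.ExteriorAlgebra.coord K) h
  have := hc _ hK (b.ExteriorAlgebra.ne_zero K)
  have := hc _ (add_mem hK hL) hne
  omega

end Field

end Module.Basis

/-- Let `V` be an `n`-dimensional complex vector space, `k, r ≥ 1` with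
`2 ≤ k`, `r + k < n` and `2k ≤ n`, and consider the `GL(V)`-equivariant space of matrices
`θ_{k,r} : Λ^k V → Hom(Λ^r V, Λ^{r+k} V)` given by wedge multiplication.  With
`E := θ_{k,r}(e₁∧⋯∧e_k)` and `E' := θ_{k,r}(e_{n-k+1}∧⋯∧e_n)` (realised inside the
exterior algebra, acting by left multiplication on the degree-`r` part `Λ^r V`), the
kernel of `E + E'` is strictly smaller than the kernel of `E`; in particular `θ_{k,r}`
is not of constant rank. -/
theorem stmt_16 (n k r : ℕ) (hk2 : 2 ≤ k) (hr : 1 ≤ r) (hrk : r + k < n) (h2k : 2 * k ≤ n)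
    (V : Type*) [AddCommGroup V] [Module ℂ V] (e : Module.Basis (Fin n) ℂ V) :
    let ιV : V →ₗ[ℂ] ExteriorAlgebra ℂ V := ExteriorAlgebra.ι ℂ
    let Λ : ℕ → Submodule ℂ (ExteriorAlgebra ℂ V) := fun m => (LinearMap.range ιV) ^ m
    let ω : ExteriorAlgebra ℂ V :=
      (((List.finRange k).map (fun i => ιV (e (Fin.castLE (by omega) i)))).prod)
    let ω' : ExteriorAlgebra ℂ V :=
      (((List.finRange k).map (fun i => ιV (e ⟨n - k + i.1, by omega⟩))).prod)
    (Module.finrank ℂ ↥(Λ r ⊓ LinearMap.ker (LinearMap.mulLeft ℂ (ω + ω'))) <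
      Module.finrank ℂ ↥(Λ r ⊓ LinearMap.ker (LinearMap.mulLeft ℂ ω)))
    ∧ ¬ ∃ c : ℕ, ∀ x ∈ Λ k, x ≠ 0 →
        Module.finrank ℂ ↥(Submodule.map (LinearMap.mulLeft ℂ x) (Λ r)) = c := by
  intro ιV Λ ω ω'
  let head : Fin k ↪o Fin n := Fin.castLEOrderEmb (by omega)
  let tail : Fin k ↪o Fin n := .ofStrictMono (fun i ↦ ⟨n - k + i.1, by omega⟩)
    fun i j hij ↦ Fin.mk_lt_mk.mpr (by simpa using hij)
  let K := Finset.univ.map head.toEmbedding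
  let L := Finset.univ.map tail.toEmbedding
  have hω : ω = e.ExteriorAlgebra K := e.list_prod_ι_eq_exteriorAlgebra head
  have hω' : ω' = e.ExteriorAlgebra L := e.list_prod_ι_eq_exteriorAlgebra tail
  have hK : K.card = k := by simp [K]
  have hlt_of_mem (i : Fin n) (hi : i ∈ K) : i.1 < k := by
    obtain ⟨j, -, rfl⟩ := Finset.mem_map.mp hi
    exact j.2
  let x : Fin k := ⟨0, by omega⟩
  let y : Fin k := ⟨k - 1, by omega⟩
  have hmain := e.finrank_inf_ker_mulLeft_exteriorAlgebra_add_lt_and_not_constant_rank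
    (K := K) (L := L) (by simp [K, L]) (Finset.mem_map_of_mem _ (Finset.mem_univ x))
    (fun h ↦ by have : n - k + 0 < k := hlt_of_mem _ h; omega)
    (Finset.mem_map_of_mem _ (Finset.mem_univ y))
    (fun h ↦ by have : n - k + (k - 1) < k := hlt_of_mem _ h; omega)
    (tail.injective.ne (by simp [x, y, Fin.ext_iff]; omega)) hr (by simp [hK]; omega)
  rw [hK] at hmain
  rw [hω, hω']
  exact hmain
end

section
/- For the group SL₂ and natural numbers m ≤ n, let V(j) denote the irreducible representation of highest weight j. For 0 ≤ k ≤ m, the highest weight vector of the summand V(n-m+2k) in Hom(V(m), V(n)) ≅ ⊕_{k=0}^{m} V(n-m+2k) (Clebsch–Gordan) corresponds to an (m+1)×(n+1) matrix of rank m+1-k; in particular its corank (as a map V(m) → V(n)) is k. -/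
/-- The raising operator `e` of `sl₂` on the irreducible representation `V(n)` in the
standard weight basis `v_j = f^j · v_hw`, `j = 0, …, n`:  `e·v_j = j(n-j+1)·v_{j-1}`. -/
def sl2E (n : ℕ) : Matrix (Fin (n + 1)) (Fin (n + 1)) ℂ :=
  fun i j => if i.1 + 1 = j.1 then ((j.1 * (n + 1 - j.1) : ℕ) : ℂ) else 0

/-- The Cartan operator `h` of `sl₂` on `V(n)` in the standard weight basis:
`h·v_j = (n-2j)·v_j`. -/
def sl2H (n : ℕ) : Matrix (Fin (n + 1)) (Fin (n + 1)) ℂ :=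
  fun i j => if i = j then ((n : ℂ) - 2 * (i.1 : ℂ)) else 0

/-! Look for the highest weight vector on the `k`-th superdiagonal, `A = ∑ cᵢ E_{i,i+k}`. Such a
matrix has `h`-weight `n - m + 2k` whatever the `cᵢ`, and since `e` acts on both weight bases by a
first superdiagonal, `e·A = 0` becomes a two-term recursion for the `cᵢ`, whose solution has no
zero among `c₀, …, c_{m-k}`. The nonzero columns of a superdiagonal matrix are orthogonal, so its
rank `m + 1 - k` is read off from the diagonal Gram matrix `AᴴA`. -/

namespace Matrix

variable {R : Type*} {p q r : ℕ}

def superdiagonal [Zero R] (k : ℕ) (c : ℕ → R) : Matrix (Fin p) (Fin q) R :=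
  of fun i j => if i.1 + k = j.1 then c i.1 else 0

@[simp]
theorem superdiagonal_apply [Zero R] (k : ℕ) (c : ℕ → R) (i : Fin p) (j : Fin q) :
    superdiagonal k c i j = if i.1 + k = j.1 then c i.1 else 0 :=
  rfl

theorem superdiagonal_congr [Zero R] {k : ℕ} {a b : ℕ → R} (h : ∀ i, i + k < q → a i = b i) :
    (superdiagonal k a : Matrix (Fin p) (Fin q) R) = superdiagonal k b := by
  ext i j
  simp only [superdiagonal_apply]
  split_ifs with hij
  · exact h i (by omega)
  · rfl

theorem superdiagonal_mul_superdiagonal [NonUnitalNonAssocSemiring R] {k l : ℕ} (a b : ℕ → R)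
    (h : q ≤ r + l) :
    (superdiagonal k a : Matrix (Fin p) (Fin r) R) *
        (superdiagonal l b : Matrix (Fin r) (Fin q) R) =
      superdiagonal (k + l) fun i => a i * b (i + k) := by
  ext i j
  simp only [mul_apply, superdiagonal_apply]
  by_cases hij : i.1 + (k + l) = j.1
  · rw [if_pos hij, Fintype.sum_eq_single ⟨i.1 + k, by omega⟩]
    · simp only [if_true, if_pos (show i.1 + k + l = j.1 by omega)]
    · intro s hs
      rw [if_neg fun h' => hs (Fin.ext h'.symm), zero_mul]
  · rw [if_neg hij]
    refine Finset.sum_eq_zero fun s _ => ?_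
    split_ifs <;> first | omega | simp

theorem conjTranspose_superdiagonal_mul_self [NonUnitalSemiring R] [StarRing R] {k : ℕ}
    (c : ℕ → R) (h : q ≤ p + k) :
    (superdiagonal k c : Matrix (Fin p) (Fin q) R)ᴴ *
        (superdiagonal k c : Matrix (Fin p) (Fin q) R) =
      diagonal fun j => if k ≤ j.1 then star (c (j.1 - k)) * c (j.1 - k) else 0 := by
  ext j j'
  simp only [mul_apply, conjTranspose_apply, superdiagonal_apply, diagonal_apply]
  by_cases hkj : k ≤ j.1
  · rw [Fintype.sum_eq_single ⟨j.1 - k, by omega⟩]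
    · by_cases hjj : j = j'
      · subst hjj
        simp only [if_pos (show j.1 - k + k = j.1 by omega), if_true, if_pos hkj]
      · rw [if_neg hjj, if_neg fun h' : j.1 - k + k = j'.1 => hjj (Fin.ext (by omega)), mul_zero]
    · intro s hs
      rw [if_neg fun h' : s.1 + k = j.1 => hs (Fin.ext (by dsimp only; omega)), star_zero, zero_mul]
  · rw [Finset.sum_eq_zero fun s _ => by rw [if_neg (by omega), star_zero, zero_mul]]
    split_ifs <;> rfl

theorem rank_superdiagonal [Field R] [PartialOrder R] [StarRing R] [StarOrderedRing R] {k : ℕ}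
    {c : ℕ → R} (h : q ≤ p + k) (hc : ∀ i < q - k, c i ≠ 0) :
    (superdiagonal k c : Matrix (Fin p) (Fin q) R).rank = q - k := by
  classical
  rw [← rank_conjTranspose_mul_self, conjTranspose_superdiagonal_mul_self c h, rank_diagonal,
    Fintype.card_subtype]
  have hsupp : ∀ j : Fin q,
      ((if k ≤ j.1 then star (c (j.1 - k)) * c (j.1 - k) else 0) ≠ 0) ↔ k ≤ j.1 := by
    intro j
    split_ifs with hkj
    · simpa [hkj] using hc _ (by omega)
    · simpa using hkj
  have hcard := Finset.card_filter_add_card_filter_not (s := Finset.univ) fun j : Fin q => j.1 < k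
  simp only [not_lt, Finset.card_univ, Fintype.card_fin, Fin.card_filter_val_lt] at hcard
  simp only [hsupp]
  omega

end Matrix

open Matrix

theorem sl2E_eq_superdiagonal (n : ℕ) :
    sl2E n = superdiagonal 1 fun i => (((i + 1) * (n - i) : ℕ) : ℂ) := by
  ext i j
  simp only [sl2E, superdiagonal_apply]
  split_ifs with hij
  · rw [← hij, Nat.add_sub_add_right]
  · rfl

theorem sl2H_eq_diagonal (n : ℕ) : sl2H n = diagonal fun i => (n : ℂ) - 2 * i.1 := by
  ext i j
  simp only [sl2H, diagonal_apply]

theorem sl2H_mul_sub_mul_sl2H_superdiagonal (m n k : ℕ) (c : ℕ → ℂ) :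
    sl2H n * (superdiagonal k c : Matrix (Fin (n + 1)) (Fin (m + 1)) ℂ) -
        (superdiagonal k c : Matrix (Fin (n + 1)) (Fin (m + 1)) ℂ) * sl2H m =
      ((n : ℂ) - m + 2 * k) • (superdiagonal k c : Matrix (Fin (n + 1)) (Fin (m + 1)) ℂ) := by
  ext i j
  simp only [sl2H_eq_diagonal, Matrix.sub_apply, Matrix.smul_apply, diagonal_mul, mul_diagonal,
    superdiagonal_apply, smul_eq_mul]
  split_ifs with hij
  · have hj : (j.1 : ℂ) = i.1 + k := by exact_mod_cast hij.symm
    rw [hj]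
    ring
  · simp

/-- The solution of `(i + 1)(n - i) c (i + 1) = (i + k + 1)(m - i - k) c i` with all denominators
cleared. -/
def hwCoeff (m n k i : ℕ) : ℕ :=
  (∏ t ∈ Finset.range i, (t + k + 1) * (m - (t + k))) *
    ∏ t ∈ Finset.Ico i (m - k), (t + 1) * (n - t)

theorem hwCoeff_pos {m n k i : ℕ} (hmn : m ≤ n) (hi : i ≤ m - k) : 0 < hwCoeff m n k i := by
  refine Nat.mul_pos (Finset.prod_pos fun t ht => ?_) (Finset.prod_pos fun t ht => ?_)
  · have := Finset.mem_range.mp ht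
    exact Nat.mul_pos (by omega) (by omega)
  · have := (Finset.mem_Ico.mp ht).2
    exact Nat.mul_pos (by omega) (by omega)

theorem hwCoeff_succ {m n k i : ℕ} (hi : i < m - k) :
    (i + 1) * (n - i) * hwCoeff m n k (i + 1) =
      hwCoeff m n k i * ((i + k + 1) * (m - (i + k))) := by
  rw [hwCoeff, hwCoeff, Finset.prod_range_succ, ← Finset.insert_Ico_add_one_left_eq_Ico hi,
    Finset.prod_insert (by simp)]
  ring

/-- For `SL₂` and `m ≤ n`, `0 ≤ k ≤ m`, the highest weight vector of the
summand `V(n-m+2k)` of `Hom(V(m), V(n)) ≅ ⊕_{k=0}^m V(n-m+2k)` (Clebsch–Gordan)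
corresponds to a matrix of rank `m+1-k`; in particular its corank, as a map
`V(m) → V(n)`, is `k`.  (A matrix `A : V(m) → V(n)` is a highest weight vector of weight
`n-m+2k` for the `sl₂`-action on `Hom(V(m),V(n))` iff `e·A := E_n A - A E_m = 0` and
`h·A := H_n A - A H_m = (n-m+2k)·A`.) -/
theorem stmt_17 (m n k : ℕ) (hmn : m ≤ n) (hk : k ≤ m) :
    ∃ A : Matrix (Fin (n + 1)) (Fin (m + 1)) ℂ, A ≠ 0 ∧
      sl2E n * A - A * sl2E m = 0 ∧
      sl2H n * A - A * sl2H m = (((n : ℂ) - (m : ℂ) + 2 * (k : ℂ))) • A ∧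
      A.rank = m + 1 - k ∧ (m + 1) - A.rank = k := by
  set A : Matrix (Fin (n + 1)) (Fin (m + 1)) ℂ := superdiagonal k fun i => (hwCoeff m n k i : ℂ)
  have hrank : A.rank = m + 1 - k := by
    open ComplexOrder in
    exact rank_superdiagonal (by omega) fun i hi =>
      Nat.cast_ne_zero.2 (hwCoeff_pos hmn (by omega)).ne'
  refine ⟨A, fun h => ?_, ?_, sl2H_mul_sub_mul_sl2H_superdiagonal m n k _, hrank, by omega⟩
  · rw [h, rank_zero] at hrank
    omega
  · rw [sl2E_eq_superdiagonal, sl2E_eq_superdiagonal,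
      superdiagonal_mul_superdiagonal _ _ (by omega), superdiagonal_mul_superdiagonal _ _ (by omega),
      add_comm 1 k, sub_eq_zero]
    exact superdiagonal_congr fun i hi => by exact_mod_cast hwCoeff_succ (by omega)
end
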